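/- Let G be a finite group, M a subgroup of G with |G : M| = p for a prime p, such that the Fitting subgroup F(G) is not contained in M and M is supersolvable. Then G is supersolvable. -/

import Mathlib

/-- A group is supersolvable if it has a normal series (all terms normal in the whole
group) with cyclic factors. -/
def IsSupersolvable (G : Type*) [Group G] : Prop :=
  ∃ (n : ℕ) (s : Fin (n + 1) → Subgroup G),
    s 0 = ⊥ ∧ s (Fin.last n) = ⊤ ∧ (∀ i, (s i).Normal) ∧
    ∀ i : Fin n, ∃ x : G, s i.succ = s i.castSucc ⊔ Subgroup.zpowers x

/-!
Since `M` has prime index and `F ⊄ M`, we have `G = F M`, and `D = F ∩ M` is a maximal, hence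
normal, subgroup of the nilpotent group `F`; being normalized by `M` as well, it is normal in `G`.
A chief factor `A / B` of `G` below `D` is centralized by the nilpotent normal subgroup `F`, so its
`G`-invariant subgroups are exactly its `M`-invariant ones. So it is a chief factor for the
conjugation action of `M`, and such a factor inside `M` is cyclic because `M` is supersolvable.
This gives a normal series of `G` with cyclic factors up to `D`; it continues through `F = D ⟨y⟩`
(`|F : D| = p`) and then through the subgroups `F Mᵢ`, where `Mᵢ` runs over a supersolvable series
of `M`.
-/

open scoped Pointwise commutatorElement

namespace Subgroup

variable {G : Type*} [Group G]

theorem le_normalizer_of_commutator_le {H K : Subgroup G} (h : ⁅H, K⁆ ≤ H) :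
    K ≤ normalizer (H : Set G) := by
  rw [le_normalizer_iff]
  intro k hk g hg
  have : ⁅k, g⁆ ∈ H := h (commutator_comm K H ▸ commutator_mem_commutator hk hg)
  simpa [commutatorElement_def] using mul_mem this hg

theorem le_sup_inf_of_le_sup {A B T : Subgroup G} (hBA : B ≤ A)
    (hTB : T ≤ normalizer (B : Set G)) (h : A ≤ B ⊔ T) : A ≤ B ⊔ (A ⊓ T) := by
  intro a ha
  have hmul : a ∈ (B : Set G) * (T : Set G) := by
    rw [← coe_mul_of_right_le_normalizer_left B T hTB]
    exact h ha
  obtain ⟨b, hb, t, ht, rfl⟩ := hmul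
  exact mul_mem_sup hb (mem_inf.2 ⟨(mul_mem_cancel_left (hBA hb)).1 ha, ht⟩)

theorem exists_eq_inf_ker_sup_zpowers {Q : Type*} [Group Q] (f : G →* Q) (H : Subgroup G)
    [IsCyclic (H.map f)] : ∃ a ∈ H, H = (H ⊓ f.ker) ⊔ zpowers a := by
  obtain ⟨⟨_, hy⟩, hgen⟩ := IsCyclic.exists_generator (α := H.map f)
  obtain ⟨a, ha, rfl⟩ := mem_map.1 hy
  refine ⟨a, ha, le_antisymm (fun h hh => ?_) (sup_le inf_le_left (zpowers_le.2 ha))⟩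
  obtain ⟨k, hk⟩ := hgen ⟨f h, mem_map_of_mem f hh⟩
  have hker : (a ^ k)⁻¹ * h ∈ H ⊓ f.ker := mem_inf.2
    ⟨mul_mem (inv_mem (zpow_mem ha k)) hh,
      by simpa [inv_mul_eq_one] using congrArg Subtype.val hk⟩
  simpa using mul_mem (mem_sup_right (zpow_mem_zpowers a k)) (mem_sup_left hker)

/-- The image of `H` in `N.normalizer ⧸ N` lies in the cyclic group generated by the image
of `x`. -/
theorem exists_eq_inf_sup_zpowers {N H : Subgroup G} {x : G} (hx : x ∈ normalizer (N : Set G))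
    (hH : H ≤ N ⊔ zpowers x) : ∃ a ∈ H, H = (H ⊓ N) ⊔ zpowers a := by
  set P := normalizer (N : Set G)
  have hHP : H ≤ P := hH.trans (sup_le le_normalizer (zpowers_le.2 hx))
  let f := QuotientGroup.mk' (N.subgroupOf P)
  have : IsCyclic ((H.subgroupOf P).map f) := by
    refine isCyclic_of_le (H' := zpowers (f ⟨x, hx⟩)) ?_
    rintro _ ⟨h, hh, rfl⟩
    have hmul : (h : G) ∈ (N : Set G) * (zpowers x : Set G) := by
      rw [← coe_mul_of_right_le_normalizer_left N _ (zpowers_le.2 hx)]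
      exact hH hh
    obtain ⟨n, hn, _, ⟨k, rfl⟩, hnx⟩ := hmul
    have : h = ⟨n, le_normalizer hn⟩ * ⟨x, hx⟩ ^ k := Subtype.ext (by simp [hnx])
    have hn1 : f ⟨n, le_normalizer hn⟩ = 1 := by
      rw [← MonoidHom.mem_ker, QuotientGroup.ker_mk']
      exact hn
    exact ⟨k, by rw [this, map_mul, hn1, one_mul, map_zpow]⟩
  obtain ⟨a, ha, hHa⟩ := exists_eq_inf_ker_sup_zpowers f (H.subgroupOf P)
  refine ⟨a, ha, ?_⟩
  have := congrArg (map P.subtype) hHa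
  rwa [map_sup, map_inf_eq _ _ _ P.subtype_injective, QuotientGroup.ker_mk',
    subgroupOf_map_subtype, subgroupOf_map_subtype, MonoidHom.map_zpowers, inf_of_le_left hHP,
    inf_of_le_left (le_normalizer : N ≤ P)] at this

theorem le_of_le_commutator_sup {F A B : Subgroup G} [B.Normal] (hF : Group.IsNilpotent F)
    (hAF : A ≤ F) (h : A ≤ ⁅A, F⁆ ⊔ B) : A ≤ B := by
  let f := QuotientGroup.mk' B
  have hA : A.map f ≤ ⁅A.map f, F.map f⁆ := by
    have hB : B.map f = ⊥ := (map_eq_bot_iff B).2 (QuotientGroup.ker_mk' B).ge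
    simpa [map_sup, map_commutator, hB] using map_mono (f := f) h
  have key : ∀ n, A.map f ≤ (F.lowerCentralSeries n).map f := by
    intro n
    induction n with
    | zero => exact map_mono hAF
    | succ n ih =>
      rw [lowerCentralSeries_succ, map_commutator]
      exact hA.trans (commutator_mono ih le_rfl)
  obtain ⟨n, hn⟩ := (isNilpotent_iff_lowerCentralSeries F).1 hF
  simpa [hn, map_eq_bot_iff, f, QuotientGroup.ker_mk'] using key n

theorem isCoatom_of_index_prime {H : Subgroup G} (h : H.index.Prime) : IsCoatom H := by
  refine ⟨fun hH => h.ne_one (index_eq_one.2 hH), fun K hHK => index_eq_one.1 ?_⟩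
  refine (h.eq_one_or_self_of_dvd _ (index_dvd_of_le hHK.le)).resolve_right fun hK => ?_
  have hrel : H.relIndex K * H.index = 1 * H.index := by
    rw [← hK, relIndex_mul_index hHK.le, hK, one_mul]
  exact hHK.not_ge (relIndex_eq_one.1 (Nat.eq_of_mul_eq_mul_right h.pos hrel))

theorem relIndex_eq_index_of_sup_eq_top {N H : Subgroup G} [N.Normal] [N.FiniteIndex]
    (h : N ⊔ H = ⊤) : H.relIndex N = H.index := by
  have hN : N.relIndex H = N.index := by
    rw [← relIndex_sup_left, h, relIndex_top_right]
  have hcard : H.relIndex N * N.index = H.index * N.index := by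
    rw [← inf_relIndex_right, relIndex_mul_index inf_le_right, ← relIndex_mul_index inf_le_left,
      inf_relIndex_left, hN, mul_comm]
  exact Nat.eq_of_mul_eq_mul_right (Nat.pos_of_ne_zero FiniteIndex.index_ne_zero) hcard

theorem normal_inf_of_normal_subgroupOf {F M : Subgroup G} [F.Normal]
    (hMF : (M.subgroupOf F).Normal) (h : F ⊔ M = ⊤) : (M ⊓ F).Normal := by
  rw [← normalizer_eq_top_iff, eq_top_iff, ← h]
  exact sup_le (normal_subgroupOf_iff_le_normalizer_inf.1 hMF)
    ((le_inf le_normalizer le_normalizer_of_normal).trans inf_normalizer_le_normalizer_inf)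

theorem exists_eq_inf_sup_zpowers_of_isCoatom_subgroupOf {F H : Subgroup G}
    (h : IsCoatom (H.subgroupOf F)) : ∃ y, F = (H ⊓ F) ⊔ zpowers y := by
  obtain ⟨y, -, hy⟩ := SetLike.exists_of_lt (lt_top_iff_ne_top.2 h.1)
  have := congrArg (map F.subtype) (h.2 _ (left_lt_sup.2 fun hle => hy (hle (mem_zpowers y))))
  rw [map_sup, subgroupOf_map_subtype, MonoidHom.map_zpowers, ← MonoidHom.range_eq_map,
    range_subtype] at this
  exact ⟨y, this.symm⟩

/-- A chain `⊥ = A₀ ≤ A₁ ≤ ⋯ ≤ Aₙ = A` of subgroups normalized by `K` with `Aᵢ₊₁ = Aᵢ ⟨xᵢ⟩`;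
for `K = ⊤` and `A = ⊤` this is a normal series of `G` with cyclic factors. -/
inductive HasInvariantCyclicSeries (K : Subgroup G) : Subgroup G → Prop
  | bot : HasInvariantCyclicSeries K ⊥
  | sup_zpowers {A : Subgroup G} (x : G) : HasInvariantCyclicSeries K A →
      K ≤ normalizer (A ⊔ zpowers x : Subgroup G) →
      HasInvariantCyclicSeries K (A ⊔ zpowers x)

namespace HasInvariantCyclicSeries

variable {K A : Subgroup G}

theorem le_normalizer (h : HasInvariantCyclicSeries K A) : K ≤ normalizer (A : Set G) := by
  cases h with
  | bot => exact le_normalizer_of_normal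
  | sup_zpowers _ _ hK => exact hK

theorem map {G' : Type*} [Group G'] (f : G →* G') (h : HasInvariantCyclicSeries K A) :
    HasInvariantCyclicSeries (K.map f) (A.map f) := by
  induction h with
  | bot => simpa using bot
  | sup_zpowers x _ hK ih =>
    rw [map_sup, MonoidHom.map_zpowers]
    exact ih.sup_zpowers (f x) (by simpa [map_sup] using (map_mono hK).trans (le_normalizer_map f))

theorem sup {N T : Subgroup G} [N.Normal] (hN : HasInvariantCyclicSeries ⊤ N)
    (hT : HasInvariantCyclicSeries K T) (hNK : N ⊔ K = ⊤) :
    HasInvariantCyclicSeries ⊤ (N ⊔ T) := by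
  induction hT with
  | bot => simpa using hN
  | @sup_zpowers A x _ hK ih =>
    rw [← sup_assoc]
    refine ih.sup_zpowers x ?_
    rw [← hNK, sup_assoc]
    refine sup_le (le_normalizer_of_commutator_le ?_) ?_
    · exact commutator_le_right _ _ |>.trans le_sup_left
    · exact (le_inf le_normalizer_of_normal hK).trans
        (normalizer_inf_normalizer_le_normalizer_sup _ _)

end HasInvariantCyclicSeries

structure IsChiefFactor (K B A : Subgroup G) : Prop where
  le_normalizer_left : K ≤ normalizer (B : Set G)
  le_normalizer_right : K ≤ normalizer (A : Set G)
  lt : B < A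
  eq_or_eq :
    ∀ C : Subgroup G, B ≤ C → C ≤ A → K ≤ normalizer (C : Set G) → C = B ∨ C = A

namespace IsChiefFactor

variable {K B A : Subgroup G}

theorem commutator_le {F : Subgroup G} [F.Normal] (h : IsChiefFactor ⊤ B A)
    (hF : Group.IsNilpotent F) (hAF : A ≤ F) : ⁅A, F⁆ ≤ B := by
  have : A.Normal := normalizer_eq_top_iff.1 (top_le_iff.1 h.le_normalizer_right)
  have : B.Normal := normalizer_eq_top_iff.1 (top_le_iff.1 h.le_normalizer_left)
  rcases h.eq_or_eq (⁅A, F⁆ ⊔ B) le_sup_right (sup_le (commutator_le_left A F) h.lt.le)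
    (normalizer_eq_top _).ge with hC | hC
  · exact le_sup_left.trans hC.le
  · exact absurd (le_of_le_commutator_sup hF hAF hC.ge) h.lt.not_ge

theorem of_commutator_le {F : Subgroup G} (h : IsChiefFactor ⊤ B A) (hAF : ⁅A, F⁆ ≤ B)
    (hFK : F ⊔ K = ⊤) : IsChiefFactor K B A where
  le_normalizer_left := le_top.trans h.le_normalizer_left
  le_normalizer_right := le_top.trans h.le_normalizer_right
  lt := h.lt
  eq_or_eq C hBC hCA hKC := by
    have hFC : F ≤ normalizer (C : Set G) :=
      le_normalizer_of_commutator_le ((commutator_mono hCA le_rfl).trans (hAF.trans hBC))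
    exact h.eq_or_eq C hBC hCA (hFK ▸ sup_le hFC hKC)

/-- Walk up the series until `B (A ∩ Tᵢ)`, which is `K`-invariant, jumps from `B` to `A`; there
`A ∩ Tᵢ₊₁` is cyclic modulo `A ∩ Tᵢ ≤ B`, because `Tᵢ₊₁ / Tᵢ` is cyclic. -/
theorem exists_eq_sup_zpowers {T : Subgroup G} (h : IsChiefFactor K B A)
    (hT : HasInvariantCyclicSeries K T) (hTK : T ≤ K) (hAT : A ≤ B ⊔ T) :
    ∃ a, A = B ⊔ zpowers a := by
  induction hT with
  | bot => exact absurd (by simpa using hAT) h.lt.not_ge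
  | @sup_zpowers T x hT _ ih =>
    have hKC : K ≤ normalizer (B ⊔ (A ⊓ T) : Subgroup G) :=
      (le_inf h.le_normalizer_left ((le_inf h.le_normalizer_right hT.le_normalizer).trans
        inf_normalizer_le_normalizer_inf)).trans (normalizer_inf_normalizer_le_normalizer_sup _ _)
    rcases h.eq_or_eq _ le_sup_left (sup_le h.lt.le inf_le_left) hKC with hC | hC
    · have hx : x ∈ normalizer (T : Set G) :=
        hT.le_normalizer (hTK (mem_sup_right (mem_zpowers x)))
      obtain ⟨a, ha, hAa⟩ :=
        exists_eq_inf_sup_zpowers hx (inf_le_right : A ⊓ (T ⊔ zpowers x) ≤ _)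
      have hB : A ⊓ (T ⊔ zpowers x) ⊓ T ≤ B :=
        (inf_le_inf_right T inf_le_left).trans (sup_eq_left.1 hC)
      refine ⟨a, le_antisymm ?_ (sup_le h.lt.le (zpowers_le.2 (mem_inf.1 ha).1))⟩
      calc A ≤ B ⊔ (A ⊓ (T ⊔ zpowers x)) :=
            le_sup_inf_of_le_sup h.lt.le (hTK.trans h.le_normalizer_left) hAT
        _ = B ⊔ (A ⊓ (T ⊔ zpowers x) ⊓ T ⊔ zpowers a) := by rw [← hAa]
        _ ≤ B ⊔ zpowers a := sup_le le_sup_left (sup_le (hB.trans le_sup_left) le_sup_right)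
    · exact ih (le_sup_left.trans hTK) (hC ▸ sup_le_sup_left inf_le_right B)

end IsChiefFactor

theorem hasInvariantCyclicSeries_of_isChiefFactor [Finite G] {A : Subgroup G} (hA : A.Normal)
    (h : ∀ B C : Subgroup G, C ≤ A → IsChiefFactor ⊤ B C → ∃ c, C = B ⊔ zpowers c) :
    HasInvariantCyclicSeries ⊤ A := by
  induction A using WellFoundedLT.induction with
  | _ A ih =>
    rcases eq_or_ne A ⊥ with rfl | hA₀
    · exact .bot
    obtain ⟨B, ⟨hB, hBA⟩, hBmax⟩ :=
      Set.Finite.exists_maximal (s := {B : Subgroup G | B.Normal ∧ B < A}) (Set.toFinite _)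
        ⟨⊥, inferInstance, bot_lt_iff_ne_bot.2 hA₀⟩
    have hchief : IsChiefFactor ⊤ B A :=
      { le_normalizer_left := (normalizer_eq_top_iff.2 hB).ge
        le_normalizer_right := (normalizer_eq_top_iff.2 hA).ge
        lt := hBA
        eq_or_eq := fun C hBC hCA hC => hCA.lt_or_eq.imp (fun hlt =>
          le_antisymm (hBmax ⟨normalizer_eq_top_iff.1 (top_le_iff.1 hC), hlt⟩ hBC) hBC) id }
    obtain ⟨c, hc⟩ := h B A le_rfl hchief
    have hB' := ih B hBA hB fun B' C hC => h B' C (hC.trans hBA.le)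
    exact hc ▸ hB'.sup_zpowers c (hc ▸ (normalizer_eq_top_iff.2 hA).ge)

end Subgroup

open Subgroup

theorem isSupersolvable_iff_hasInvariantCyclicSeries {G : Type*} [Group G] :
    IsSupersolvable G ↔ HasInvariantCyclicSeries (⊤ : Subgroup G) ⊤ := by
  constructor
  · rintro ⟨n, s, h0, hn, hnorm, hstep⟩
    suffices ∀ i, HasInvariantCyclicSeries ⊤ (s i) from hn ▸ this (Fin.last n)
    intro i
    induction i using Fin.induction with
    | zero => exact h0 ▸ .bot
    | succ i ih =>
      obtain ⟨x, hx⟩ := hstep i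
      exact hx ▸ ih.sup_zpowers x (hx ▸ (normalizer_eq_top_iff.2 (hnorm i.succ)).ge)
  · suffices ∀ A : Subgroup G, HasInvariantCyclicSeries ⊤ A →
        ∃ (n : ℕ) (s : Fin (n + 1) → Subgroup G), s 0 = ⊥ ∧ s (Fin.last n) = A ∧
          (∀ i, (s i).Normal) ∧ ∀ i : Fin n, ∃ x : G, s i.succ = s i.castSucc ⊔ zpowers x
      from this ⊤
    intro A h
    induction h with
    | bot => exact ⟨0, fun _ => ⊥, rfl, rfl, fun _ => inferInstance, fun i => i.elim0⟩
    | @sup_zpowers A x _ hK ih =>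
      obtain ⟨n, s, h0, hn, hnorm, hstep⟩ := ih
      refine ⟨n + 1, Fin.snoc s (A ⊔ zpowers x), ?_, by simp, fun i => ?_, fun i => ?_⟩
      · rw [← Fin.castSucc_zero, Fin.snoc_castSucc, h0]
      · induction i using Fin.lastCases with
        | last => simpa using normalizer_eq_top_iff.1 (top_le_iff.1 hK)
        | cast j => simpa using hnorm j
      · induction i using Fin.lastCases with
        | last => exact ⟨x, by simp [hn]⟩
        | cast j =>
          rw [Fin.succ_castSucc, Fin.snoc_castSucc, Fin.snoc_castSucc]
          exact hstep j

theorem IsSupersolvable.hasInvariantCyclicSeries {G : Type*} [Group G] {M : Subgroup G}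
    (hM : IsSupersolvable M) : HasInvariantCyclicSeries M M := by
  simpa [← MonoidHom.range_eq_map] using
    (isSupersolvable_iff_hasInvariantCyclicSeries.1 hM).map M.subtype

theorem supersolvable_of_index_p_general {G : Type*} [Group G] [Finite G] (p : ℕ) (hp : p.Prime)
    (M : Subgroup G) (hMi : M.index = p) (F : Subgroup G) (hFn : F.Normal)
    (hFnil : Group.IsNilpotent F)
    (hFM : ¬ F ≤ M) (hM : IsSupersolvable M) : IsSupersolvable G := by
  have htop : F ⊔ M = ⊤ := (isCoatom_of_index_prime (hMi ▸ hp)).2 _ (right_lt_sup.2 hFM)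
  have hMF : IsCoatom (M.subgroupOf F) :=
    isCoatom_of_index_prime (by rwa [← relIndex, relIndex_eq_index_of_sup_eq_top htop, hMi])
  have hD : (M ⊓ F).Normal := normal_inf_of_normal_subgroupOf
    (Group.normalizerCondition_of_isNilpotent.normal_of_coatom _ hMF) htop
  have hMser := hM.hasInvariantCyclicSeries
  have hDser : HasInvariantCyclicSeries ⊤ (M ⊓ F) :=
    hasInvariantCyclicSeries_of_isChiefFactor hD fun B A hA hBA =>
      (hBA.of_commutator_le (hBA.commutator_le hFnil (hA.trans inf_le_right)) htop)
        |>.exists_eq_sup_zpowers hMser le_rfl ((hA.trans inf_le_left).trans le_sup_right)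
  obtain ⟨y, hy⟩ := exists_eq_inf_sup_zpowers_of_isCoatom_subgroupOf hMF
  have hFser : HasInvariantCyclicSeries ⊤ F :=
    hy ▸ hDser.sup_zpowers y (hy ▸ (normalizer_eq_top F).ge)
  rw [isSupersolvable_iff_hasInvariantCyclicSeries]
  simpa only [htop] using hFser.sup hMser htop

theorem supersolvable_of_index_p {G : Type*} [Group G] [Finite G] (p : ℕ) (hp : p.Prime)
    (M : Subgroup G) (hMi : M.index = p) (F : Subgroup G) (hFn : F.Normal)
    (hFnil : Group.IsNilpotent F)
    (hFmax : ∀ N : Subgroup G, N.Normal → Group.IsNilpotent N → N ≤ F)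
    (hFM : ¬ F ≤ M) (hM : IsSupersolvable M) : IsSupersolvable G :=
  supersolvable_of_index_p_general p hp M hMi F hFn hFnil hFM hM
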